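/- arXiv:math/0504011 — 3 statements merged into one kernel-verified Lean document; each statement's English description precedes it below -/
import Mathlib

section
/- Let u, v : M → ℝ be smooth functions on a Riemannian manifold and e₂ a unit vector field such that e₂(v) = v² − u² − 1, e₂(u) = 2uv, and both u and v are harmonic (Δu = Δv = 0). Then the function φ = u² + v² − 1 satisfies Δφ ≥ 2φ². -/
/-- On a Riemannian manifold `M` (whose Laplace–Beltrami operator `Δ`,
squared-gradient-norm `gradSq f = |∇f|²`, and differentiation `e₂` along a unit vector
field are abstracted by the hypotheses below, since these operators are not yet available
in Mathlib), if `u, v : M → ℝ` are smooth functions with `e₂(v) = v² − u² − 1`,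
`e₂(u) = 2uv` and `Δu = Δv = 0`, then `φ = u² + v² − 1` satisfies `Δφ ≥ 2φ²`. -/
theorem laplacian_ineq_phi {M : Type*}
    (Δ : (M → ℝ) → (M → ℝ))                 -- Laplace–Beltrami operator
    (gradSq : (M → ℝ) → (M → ℝ))            -- squared norm of the gradient, |∇f|²
    (e₂ : (M → ℝ) → (M → ℝ))                -- derivative along the unit field e₂
    -- Δ is linear and annihilates constants:
    (hΔadd : ∀ f g : M → ℝ, Δ (f + g) = Δ f + Δ g)
    (hΔconst : ∀ c : ℝ, Δ (fun _ => c) = 0)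
    -- Bochner-type product rule: Δ(f²) = 2 f Δf + 2 |∇f|²:
    (hΔsq : ∀ f : M → ℝ, ∀ x : M, Δ (fun y => f y ^ 2) x = 2 * f x * Δ f x + 2 * gradSq f x)
    -- e₂ is a unit vector field, so |∇f|² ≥ (e₂ f)²:
    (hunit : ∀ f : M → ℝ, ∀ x : M, (e₂ f x) ^ 2 ≤ gradSq f x)
    (u v : M → ℝ)
    (hv : ∀ x, e₂ v x = v x ^ 2 - u x ^ 2 - 1)
    (hu : ∀ x, e₂ u x = 2 * u x * v x)
    (hharm_u : Δ u = 0) (hharm_v : Δ v = 0) :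
    ∀ x : M, 2 * (u x ^ 2 + v x ^ 2 - 1) ^ 2 ≤
      Δ (fun y => u y ^ 2 + v y ^ 2 - 1) x := by
  intro x
  have hsplit : (fun y => u y ^ 2 + v y ^ 2 - 1)
      = (fun y => u y ^ 2) + ((fun y => v y ^ 2) + (fun _ => (-1 : ℝ))) := by
    funext y; simp; ring
  have hΔφ : Δ (fun y => u y ^ 2 + v y ^ 2 - 1) x
      = 2 * gradSq u x + 2 * gradSq v x := by
    rw [hsplit, hΔadd, hΔadd]
    simp [hΔsq, hΔconst, hharm_u, hharm_v]
  rw [hΔφ]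
  have h1 := hunit u x
  have h2 := hunit v x
  rw [hu x] at h1
  rw [hv x] at h2
  nlinarith [sq_nonneg (u x), sq_nonneg (u x * v x)]
end

section
/- Let g : M² → S⁴₁ be a stationary spacelike immersion, x ∈ M² a non-totally-geodesic point with Gaussian curvature K(x) ≥ 1. Then for every unit timelike normal vector w at x, the shape operator A_w is nonsingular: det A_w(x) ≠ 0. -/
/-- Proposition 1(iii): let `g : M² → S⁴₁` be a stationary spacelike immersion
and `x` a non-totally-geodesic point with Gaussian curvature `K(x) ≥ 1`.  In terms of the
shape operators `A₃, A₄` at `x` relative to an adapted orthonormal normal frame `{e₃, e₄}`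
(`e₃` spacelike, `e₄` timelike) these hypotheses read: `A₃, A₄` are symmetric and trace-free
(stationarity), not both zero (`x` not totally geodesic), and
`K(x) = 1 + det A₃ − det A₄ ≥ 1` (Gauss equation).  A unit timelike normal is
`w = a e₃ + b e₄` with `⟨w,w⟩ = a² − b² = −1`, with shape operator `A_w = a A₃ + b A₄`.
Conclusion: `det A_w ≠ 0` for every such `w`. -/
theorem timelike_shape_operator_nonsingular (A₃ A₄ : Matrix (Fin 2) (Fin 2) ℝ)
    (h₃ : A₃.IsSymm) (h₄ : A₄.IsSymm) (htr₃ : A₃.trace = 0) (htr₄ : A₄.trace = 0)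
    (hntg : ¬(A₃ = 0 ∧ A₄ = 0))
    (hK : 1 ≤ 1 + A₃.det - A₄.det) :
    ∀ a b : ℝ, a ^ 2 - b ^ 2 = -1 → (a • A₃ + b • A₄).det ≠ 0 := by
  intro a b hab h
  set p := A₃ 0 0 with hp
  set q := A₃ 0 1 with hq
  set r := A₄ 0 0 with hr
  set s := A₄ 0 1 with hs
  have s3 : A₃ 1 0 = q := h₃.apply 0 1
  have s4 : A₄ 1 0 = s := h₄.apply 0 1
  have t3 : A₃ 1 1 = -p := by
    have := htr₃; rw [Matrix.trace_fin_two] at this; linarith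
  have t4 : A₄ 1 1 = -r := by
    have := htr₄; rw [Matrix.trace_fin_two] at this; linarith
  have hd3 : A₃.det = -(p ^ 2 + q ^ 2) := by
    rw [Matrix.det_fin_two, s3, t3]; ring
  have hd4 : A₄.det = -(r ^ 2 + s ^ 2) := by
    rw [Matrix.det_fin_two, s4, t4]; ring
  have hKle : p ^ 2 + q ^ 2 ≤ r ^ 2 + s ^ 2 := by
    rw [hd3, hd4] at hK; linarith
  have hdet : (a * p + b * r) ^ 2 + (a * q + b * s) ^ 2 = 0 := by
    rw [Matrix.det_fin_two] at h
    simp only [Matrix.add_apply, Matrix.smul_apply, smul_eq_mul, s3, s4, t3, t4] at h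
    nlinarith [h]
  have e1 : a * p + b * r = 0 := by
    have h1 : (a * p + b * r) ^ 2 = 0 := by
      linarith [sq_nonneg (a * p + b * r), sq_nonneg (a * q + b * s)]
    exact pow_eq_zero_iff two_ne_zero |>.mp h1
  have e2 : a * q + b * s = 0 := by
    have h1 : (a * q + b * s) ^ 2 = 0 := by
      linarith [sq_nonneg (a * p + b * r), sq_nonneg (a * q + b * s)]
    exact pow_eq_zero_iff two_ne_zero |>.mp h1
  -- b*r = -a*p, b*s = -a*q, so b²(r²+s²) = a²(p²+q²) ≤ a²(r²+s²), and b² - a² = 1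
  have key : b ^ 2 * (r ^ 2 + s ^ 2) = a ^ 2 * (p ^ 2 + q ^ 2) := by
    linear_combination (b * r - a * p) * e1 + (b * s - a * q) * e2
  have hrsnn : (0:ℝ) ≤ r ^ 2 + s ^ 2 := by positivity
  have hb2 : b ^ 2 = a ^ 2 + 1 := by linarith
  have key2 : a ^ 2 * (r ^ 2 + s ^ 2) + (r ^ 2 + s ^ 2) = a ^ 2 * (p ^ 2 + q ^ 2) := by
    linear_combination key - (r ^ 2 + s ^ 2) * hb2
  have hm := mul_le_mul_of_nonneg_left hKle (sq_nonneg a)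
  have hrs : r ^ 2 + s ^ 2 = 0 := le_antisymm (by linarith) hrsnn
  have hr0 : r = 0 := by
    have h1 : r ^ 2 = 0 := by linarith [sq_nonneg r, sq_nonneg s]
    exact pow_eq_zero_iff two_ne_zero |>.mp h1
  have hs0 : s = 0 := by
    have h1 : s ^ 2 = 0 := by linarith [sq_nonneg r, sq_nonneg s]
    exact pow_eq_zero_iff two_ne_zero |>.mp h1
  have hpq : p ^ 2 + q ^ 2 = 0 := le_antisymm (hrs ▸ hKle) (by positivity)
  have hp0 : p = 0 := by
    have h1 : p ^ 2 = 0 := by linarith [sq_nonneg p, sq_nonneg q]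
    exact pow_eq_zero_iff two_ne_zero |>.mp h1
  have hq0 : q = 0 := by
    have h1 : q ^ 2 = 0 := by linarith [sq_nonneg p, sq_nonneg q]
    exact pow_eq_zero_iff two_ne_zero |>.mp h1
  apply hntg
  constructor <;> ext i j <;> fin_cases i <;> fin_cases j <;>
    first
      | exact hp0
      | exact hq0
      | exact hr0
      | exact hs0
      | simp [s3, s4, t3, t4, hp0, hq0, hr0, hs0]
end

section
/- Let a > 0, b ∈ ℝ with 2a cosh 2t + b > 0 for all t, set λ(t)² = 2/(2a cosh 2t + b), v(t) = −2a sinh 2t/(2a cosh 2t + b), and φ(t) = tanh t. Suppose moreover u(t) satisfies v' = v² − u² − 1. Then the identity φ/(1+φ²) = −v/(1 + u² + v²) holds for all t. -/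
/-- equation (4.6): let `a > 0`, `b ∈ ℝ` with `2a cosh 2t + b > 0` for all `t`,
`λ(t)² = 2/(2a cosh 2t + b)`, `v(t) = −2a sinh 2t/(2a cosh 2t + b)`, `φ(t) = tanh t`, and let
`u` satisfy the flow equation `v' = v² − u² − 1`.  Then
`φ/(1 + φ²) = −v/(1 + u² + v²)` for all `t`. -/
theorem tanh_identity (a b : ℝ) (ha : 0 < a)
    (hpos : ∀ t : ℝ, 0 < 2 * a * Real.cosh (2 * t) + b)
    (lamSq v φ u : ℝ → ℝ)
    (hlamSq : ∀ t, lamSq t = 2 / (2 * a * Real.cosh (2 * t) + b))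
    (hv : ∀ t, v t = -(2 * a * Real.sinh (2 * t)) / (2 * a * Real.cosh (2 * t) + b))
    (hφ : ∀ t, φ t = Real.tanh t)
    (hu : ∀ t, deriv v t = v t ^ 2 - u t ^ 2 - 1) :
    ∀ t : ℝ, φ t / (1 + φ t ^ 2) = -v t / (1 + u t ^ 2 + v t ^ 2) := by
  have hveq : v = fun t => -(2 * a * Real.sinh (2 * t)) / (2 * a * Real.cosh (2 * t) + b) :=
    funext hv
  intro t
  have hD := hpos t
  have hDne : (2 * a * Real.cosh (2 * t) + b) ≠ 0 := ne_of_gt hD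
  -- derivative of the inner function 2t
  have h2t : HasDerivAt (fun t : ℝ => 2 * t) 2 t := by
    simpa using (hasDerivAt_id t).const_mul 2
  have hnum : HasDerivAt (fun t => -(2 * a * Real.sinh (2 * t)))
      (-(2 * a * (Real.cosh (2 * t) * 2))) t := by
    exact (((Real.hasDerivAt_sinh (2 * t)).comp t h2t).const_mul (2 * a)).neg
  have hden : HasDerivAt (fun t => 2 * a * Real.cosh (2 * t) + b)
      (2 * a * (Real.sinh (2 * t) * 2)) t := by
    simpa using (((Real.hasDerivAt_cosh (2 * t)).comp t h2t).const_mul (2 * a)).add_const b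
  have hvder : HasDerivAt v
      ((-(2 * a * (Real.cosh (2 * t) * 2)) * (2 * a * Real.cosh (2 * t) + b)
        - -(2 * a * Real.sinh (2 * t)) * (2 * a * (Real.sinh (2 * t) * 2)))
        / (2 * a * Real.cosh (2 * t) + b) ^ 2) t := by
    rw [hveq]; exact hnum.div hden hDne
  have hderiv := hvder.deriv
  have hu2 : u t ^ 2 = v t ^ 2 - 1 - deriv v t := by
    have := hu t; linarith
  -- 1 + u² + v² = 4 a cosh(2t) / D
  have hC : (0:ℝ) < Real.cosh (2 * t) := Real.cosh_pos _
  have hkey : 1 + u t ^ 2 + v t ^ 2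
      = 4 * a * Real.cosh (2 * t) / (2 * a * Real.cosh (2 * t) + b) := by
    rw [hu2, hderiv, hv t]
    have hid : Real.cosh (2 * t) ^ 2 - Real.sinh (2 * t) ^ 2 = 1 := by
      have := Real.cosh_sq_sub_sinh_sq (2 * t); nlinarith [this]
    field_simp
    nlinarith [hid, sq_nonneg (2 * a * Real.cosh (2 * t) + b)]
  rw [hkey, hv t, hφ t]
  have hRHS : -(-(2 * a * Real.sinh (2 * t)) / (2 * a * Real.cosh (2 * t) + b))
      / (4 * a * Real.cosh (2 * t) / (2 * a * Real.cosh (2 * t) + b))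
      = Real.sinh (2 * t) / (2 * Real.cosh (2 * t)) := by
    field_simp
    ring
  rw [hRHS, Real.tanh_eq_sinh_div_cosh]
  have hct : (0:ℝ) < Real.cosh t := Real.cosh_pos _
  have hs2 : Real.sinh (2 * t) = 2 * Real.sinh t * Real.cosh t := Real.sinh_two_mul t
  have hc2 : Real.cosh (2 * t) = Real.cosh t ^ 2 + Real.sinh t ^ 2 := by nlinarith [Real.cosh_sq_sub_sinh_sq t, Real.cosh_two_mul t]
  have hden2 : (0:ℝ) < 1 + (Real.sinh t / Real.cosh t) ^ 2 := by positivity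
  rw [hs2, hc2]
  field_simp
end
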